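/- Let m ≥ 3 and let a < b with b - a ≥ 2. Suppose nonnegative integers e_{a}, e_{a+1}, …, e_{b} (angle counts) and p ≥ 1, q ≥ 0 satisfy: d_{a-1} = e_a, d_a = e_a + e_{a+1} + p, d_i = e_i + e_{i+1} for a+1 ≤ i ≤ b-3, d_{b-2} = e_{b-2}, where in case b - a = 2 the middle equation reads d_a = e_a + p and there are no equations with e_{a+1}. Suppose another family e'_i, p' with p' = 0 satisfies the same equations with the same d_i. Then the alternating sum ∑_{i=a-1}^{b-2} (-1)^i d_i equals (-1)^a p for the first family and lies in (-1)^{a-1}·ℕ for the second, giving a contradiction when p > 0. -/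
import Mathlib


/-- Arithmetic core of Case 1 in Lemma 3.2: if the intersection numbers `d` admit a
decomposition into angle counts `e` with a positive endpoint-segment count `p ≥ 1`,
and also a decomposition into angle counts `e'` with no endpoint-segment count
(`p' = 0`), then comparing the alternating sums `∑_{i=a-1}^{b-2} (-1)^i d_i`
(which equals `(-1)^a p` for the first family and has the opposite sign, being `0`
here, for the second) yields a contradiction. -/
theorem alternating_sum_contradiction (a b : ℕ) (ha : 1 ≤ a) (hab : a + 2 ≤ b)
    (d e e' : ℕ → ℕ) (p : ℕ) (hp : 1 ≤ p)
    -- first family, with endpoint-segment count p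
    (h1 : d (a - 1) = e a)
    (h2 : b = a + 2 → d a = e a + p)
    (h2' : b ≠ a + 2 → d a = e a + e (a + 1) + p)
    (h3 : ∀ i, a + 1 ≤ i → i ≤ b - 3 → d i = e i + e (i + 1))
    (h4 : b ≠ a + 2 → d (b - 2) = e (b - 2))
    -- second family, with endpoint-segment count 0
    (g1 : d (a - 1) = e' a)
    (g2 : b = a + 2 → d a = e' a)
    (g2' : b ≠ a + 2 → d a = e' a + e' (a + 1))
    (g3 : ∀ i, a + 1 ≤ i → i ≤ b - 3 → d i = e' i + e' (i + 1))
    (g4 : b ≠ a + 2 → d (b - 2) = e' (b - 2)) :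
    False := by
  by_cases hb : b = a + 2
  · have h := h2 hb
    have g := g2 hb
    omega
  · have hb3 : a + 3 ≤ b := by omega
    have key : ∀ j, j ≤ b - 3 - a →
        (e' (a + 1 + j) : ℤ) - e (a + 1 + j) = (-1) ^ j * p := by
      intro j
      induction j with
      | zero =>
        intro _
        have h := h2' hb
        have g := g2' hb
        have : e' (a + 1) = e (a + 1) + p := by omega
        simp [this]
      | succ j ih =>
        intro hj
        have ihv := ih (by omega)
        have h3' := h3 (a + 1 + j) (by omega) (by omega)
        have g3' := g3 (a + 1 + j) (by omega) (by omega)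
        have heq : (e' (a + 1 + (j + 1)) : ℤ) - e (a + 1 + (j + 1)) =
            -((e' (a + 1 + j) : ℤ) - e (a + 1 + j)) := by
          have hr : a + 1 + (j + 1) = (a + 1 + j) + 1 := by ring
          rw [hr]
          have : e (a + 1 + j) + e (a + 1 + j + 1) = e' (a + 1 + j) + e' (a + 1 + j + 1) := by
            omega
          omega
        rw [heq, ihv]
        ring
    have hend := key (b - 3 - a) le_rfl
    have hbe : a + 1 + (b - 3 - a) = b - 2 := by omega
    rw [hbe] at hend
    have he : e (b - 2) = e' (b - 2) := by
      have := h4 hb; have := g4 hb; omega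
    rw [he, sub_self] at hend
    have hpne : (p : ℤ) ≠ 0 := by exact_mod_cast (by omega : p ≠ 0)
    have := mul_ne_zero (pow_ne_zero (b - 3 - a) (by norm_num : (-1 : ℤ) ≠ 0)) hpne
    exact this hend.symm
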